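/- Let I be an irreducible interval of a MinBudget instance (N, ⊴, c). Then every ideal J ⊆ I of ⊴_I satisfies r(J) ≥ r(I). -/

import Mathlib

/-!
If `c(I) ≥ 0`, comparing `I` with `J` in the cbr-preorder is already the claim. Otherwise, restrict
an optimal schedule of `I` to `J`: the budget of the restricted schedule is attained on the
`J`-part of some prefix `P` of the optimal schedule, and prefixes are ideals with `c(P) ≤ b(I)`.
Hence `r(J) ≥ c(P ∪ J) - b(I)` for the ideal `P ∪ J`. Played against a cheapest ideal,
irreducibility forces every ideal to cost at least `c(I)`, so `r(J) ≥ c(I) - b(I) = r(I)`.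
-/

open List

variable {ι : Type*} [DecidableEq ι]

/-- Total cost of a schedule (list of jobs). -/
def listCost (c : ι → ℝ) (S : List ι) : ℝ := (S.map c).sum

/-- Budget of a schedule: maximum cost of a prefix (the empty prefix has cost 0). -/
def listBudget (c : ι → ℝ) : List ι → ℝ
  | [] => 0
  | j :: t => max 0 (c j + listBudget c t)

/-- Return of a schedule. -/
def listReturn (c : ι → ℝ) (S : List ι) : ℝ := listCost c S - listBudget c S

/-- `S` enumerates the finite job set `N` without repetition. -/
def IsScheduleOf (N : Finset ι) (S : List ι) : Prop :=
  S.Nodup ∧ ∀ j, j ∈ S ↔ j ∈ N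

/-- `S` is a linear extension of the precedence relation `r` (restricted to its jobs). -/
def RespectsOrder (r : ι → ι → Prop) (S : List ι) : Prop :=
  ∀ i j, r i j → i ∈ S → j ∈ S → S.idxOf i ≤ S.idxOf j

/-- Minimum budget over all feasible schedules of the job set `X`. -/
noncomputable def setBudget (r : ι → ι → Prop) (c : ι → ℝ) (X : Finset ι) : ℝ :=
  sInf {b | ∃ S : List ι, IsScheduleOf X S ∧ RespectsOrder r S ∧ listBudget c S = b}

/-- Total cost of a job set. -/
def setCost (c : ι → ℝ) (X : Finset ι) : ℝ := ∑ j ∈ X, c j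

/-- Return of a job set. -/
noncomputable def setReturn (r : ι → ι → Prop) (c : ι → ℝ) (X : Finset ι) : ℝ :=
  setCost c X - setBudget r c X

/-- The cbr-preorder on job sets. -/
def cbrLE (r : ι → ι → Prop) (c : ι → ℝ) (X Y : Finset ι) : Prop :=
  (setCost c X < 0 ∧ 0 ≤ setCost c Y) ∨
  (setCost c X < 0 ∧ setCost c Y < 0 ∧ setBudget r c X < setBudget r c Y) ∨
  (setCost c X < 0 ∧ setCost c Y < 0 ∧ setBudget r c X = setBudget r c Y ∧
    setReturn r c X ≤ setReturn r c Y) ∨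
  (0 ≤ setCost c X ∧ 0 ≤ setCost c Y ∧ setReturn r c X ≤ setReturn r c Y)

/-- `J` is an ideal (downward-closed subset) of `r` restricted to `I`. -/
def IsIdealIn (r : ι → ι → Prop) (I J : Finset ι) : Prop :=
  J ⊆ I ∧ ∀ j ∈ J, ∀ i ∈ I, r i j → i ∈ J

/-- `F` is a filter (upward-closed subset) of `r` restricted to `I`. -/
def IsFilterIn (r : ι → ι → Prop) (I F : Finset ι) : Prop :=
  F ⊆ I ∧ ∀ i ∈ F, ∀ j ∈ I, r i j → j ∈ F

/-- `I` is an interval of `r` on `N`: intersection of an ideal and a filter. -/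
def IsIntervalIn (r : ι → ι → Prop) (N I : Finset ι) : Prop :=
  ∃ J F, IsIdealIn r N J ∧ IsFilterIn r N F ∧ I = J ∩ F

/-- An irreducible interval: every ideal of the restricted order is `⪰` the interval. -/
def IsIrreducibleIn (r : ι → ι → Prop) (c : ι → ℝ) (N I : Finset ι) : Prop :=
  IsIntervalIn r N I ∧ ∀ J, IsIdealIn r I J → cbrLE r c I J

/-- A schedule (given as blocks `SS`) in increasing irreducible structure. -/
def IncIrrStructure (r : ι → ι → Prop) (c : ι → ℝ) (N : Finset ι)
    (SS : List (List ι)) : Prop :=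
  IsScheduleOf N SS.flatten ∧ RespectsOrder r SS.flatten ∧
  (∀ S ∈ SS, IsIrreducibleIn r c N S.toFinset ∧ RespectsOrder r S ∧
    listBudget c S = setBudget r c S.toFinset) ∧
  ∀ i j : Fin SS.length, i < j → cbrLE r c (SS.get i).toFinset (SS.get j).toFinset

section ListBudget

variable {α : Type*} (c : α → ℝ)

lemma listBudget_nonneg : ∀ S : List α, 0 ≤ listBudget c S
  | [] => le_rfl
  | _ :: _ => le_max_left _ _

lemma listCost_take_le_listBudget :
    ∀ (S : List α) (n : ℕ), listCost c (S.take n) ≤ listBudget c S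
  | [], _ => by simp [listCost, listBudget]
  | a :: t, 0 => by simpa [listCost] using listBudget_nonneg c (a :: t)
  | a :: t, n + 1 => by
    have := listCost_take_le_listBudget t n
    simp only [listCost, take_succ_cons, map_cons, sum_cons, listBudget] at this ⊢
    exact le_max_of_le_right (by linarith)

lemma exists_listBudget_eq_listCost_take :
    ∀ S : List α, ∃ n, listBudget c S = listCost c (S.take n)
  | [] => ⟨0, by simp [listCost, listBudget]⟩
  | a :: t => by
    obtain ⟨n, hn⟩ := exists_listBudget_eq_listCost_take t
    rcases le_or_gt (c a + listBudget c t) 0 with h | h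
    · exact ⟨0, by simp [listCost, listBudget, max_eq_left h]⟩
    · refine ⟨n + 1, ?_⟩
      rw [listBudget, max_eq_right h.le, hn]
      simp [listCost]

end ListBudget

lemma exists_take_filter_eq_filter_take {α : Type*} (p : α → Bool) :
    ∀ (S : List α) (n : ℕ), ∃ m, (S.filter p).take n = (S.take m).filter p
  | [], _ => ⟨0, by simp⟩
  | a :: t, n => by
    by_cases hpa : p a
    · cases n with
      | zero => exact ⟨0, by simp⟩
      | succ k =>
        obtain ⟨m, hm⟩ := exists_take_filter_eq_filter_take p t k
        exact ⟨m + 1, by simp [hpa, hm]⟩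
    · obtain ⟨m, hm⟩ := exists_take_filter_eq_filter_take p t n
      exact ⟨m + 1, by simp [hpa, hm]⟩

section Schedules

variable {r : ι → ι → Prop}

lemma respectsOrder_iff_pairwise {S : List ι} (hS : S.Nodup) :
    RespectsOrder r S ↔ S.Pairwise (fun a b => ¬ r b a) := by
  rw [pairwise_iff_getElem]
  constructor
  · intro ho p q hp hq hpq hqp
    have := ho _ _ hqp (getElem_mem hq) (getElem_mem hp)
    rw [hS.idxOf_getElem, hS.idxOf_getElem] at this
    omega
  · intro hpw i j hij hi hj
    by_contra! hlt
    have hi' := idxOf_lt_length_iff.mpr hi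
    have hj' := idxOf_lt_length_iff.mpr hj
    have := hpw _ _ hj' hi' hlt
    rw [getElem_idxOf, getElem_idxOf] at this
    exact this hij

lemma IsScheduleOf.filter {X J : Finset ι} {S : List ι} (hS : IsScheduleOf X S) (hJX : J ⊆ X) :
    IsScheduleOf J (S.filter (· ∈ J)) :=
  ⟨hS.1.filter _, fun j => by simpa [hS.2 j] using fun h => hJX h⟩

lemma RespectsOrder.filter {S : List ι} (hS : S.Nodup) (ho : RespectsOrder r S) (p : ι → Bool) :
    RespectsOrder r (S.filter p) :=
  (respectsOrder_iff_pairwise (hS.filter p)).mpr (((respectsOrder_iff_pairwise hS).mp ho).filter p)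

lemma isIdealIn_toFinset_take {I : Finset ι} {S : List ι} (hS : IsScheduleOf I S)
    (ho : RespectsOrder r S) (m : ℕ) : IsIdealIn r I (S.take m).toFinset := by
  refine ⟨fun x hx => (hS.2 x).mp (mem_of_mem_take (mem_toFinset.mp hx)), ?_⟩
  intro j hj i hiI hij
  rw [mem_toFinset] at hj ⊢
  by_contra hi
  have hpw := (respectsOrder_iff_pairwise hS.1).mp ho
  rw [← take_append_drop m S, pairwise_append] at hpw
  have hi' : i ∈ S.drop m := by
    have := (hS.2 i).mpr hiI
    rw [← take_append_drop m S, mem_append] at this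
    exact this.resolve_left hi
  exact hpw.2.2 j hj i hi' hij

lemma exists_scheduleOf_respectsOrder (hr : IsPartialOrder ι r) (X : Finset ι) :
    ∃ S, IsScheduleOf X S ∧ RespectsOrder r S := by
  classical
  obtain ⟨s, hs, hrs⟩ := extend_partialOrder r
  have hnd := X.sort_nodup s
  refine ⟨X.sort s, ⟨hnd, fun j => X.mem_sort s⟩, (respectsOrder_iff_pairwise hnd).mpr ?_⟩
  refine ((X.pairwise_sort s).and hnd).imp fun {a b} ⟨hab, hne⟩ hba => hne ?_
  exact antisymm hab (hrs _ _ hba)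

end Schedules

section Budgets

variable {r : ι → ι → Prop} (c : ι → ℝ)

lemma setCost_toFinset {S : List ι} (hS : S.Nodup) : setCost c S.toFinset = listCost c S :=
  sum_toFinset c hS

lemma setBudget_le_listBudget {X : Finset ι} {S : List ι} (hS : IsScheduleOf X S)
    (ho : RespectsOrder r S) : setBudget r c X ≤ listBudget c S :=
  csInf_le ⟨0, by rintro _ ⟨S', -, -, rfl⟩; exact listBudget_nonneg c S'⟩ ⟨S, hS, ho, rfl⟩

lemma exists_listBudget_eq_setBudget (hr : IsPartialOrder ι r) (X : Finset ι) :
    ∃ S, IsScheduleOf X S ∧ RespectsOrder r S ∧ listBudget c S = setBudget r c X := by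
  obtain ⟨S₀, hS₀, ho₀⟩ := exists_scheduleOf_respectsOrder hr X
  have hfin : {b | ∃ S, IsScheduleOf X S ∧ RespectsOrder r S ∧ listBudget c S = b}.Finite := by
    refine (X.toList.permutations.map (listBudget c)).finite_toSet.subset ?_
    rintro _ ⟨S, hS, -, rfl⟩
    refine mem_map_of_mem (mem_permutations.mpr ?_)
    exact perm_of_nodup_nodup_toFinset_eq hS.1 X.nodup_toList (by ext; simp [hS.2])
  exact Set.Nonempty.csInf_mem (by exact ⟨_, S₀, hS₀, ho₀, rfl⟩) hfin

/-- Restrict an optimal schedule of `I` to `J`: the prefix of the restriction realising its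
budget is the `J`-part of a prefix `P` of the optimal schedule. -/
lemma exists_isIdealIn_setBudget_le_setCost_inter (hr : IsPartialOrder ι r) {I J : Finset ι}
    (hJI : J ⊆ I) :
    ∃ P, IsIdealIn r I P ∧ setBudget r c J ≤ setCost c (P ∩ J) ∧
      setCost c P ≤ setBudget r c I := by
  obtain ⟨S, hS, ho, hSb⟩ := exists_listBudget_eq_setBudget c hr I
  obtain ⟨n, hn⟩ := exists_listBudget_eq_listCost_take c (S.filter (· ∈ J))
  obtain ⟨m, hm⟩ := exists_take_filter_eq_filter_take (· ∈ J) S n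
  have hnd : (S.take m).Nodup := hS.1.sublist (take_sublist m S)
  refine ⟨(S.take m).toFinset, isIdealIn_toFinset_take hS ho m, ?_, ?_⟩
  · calc setBudget r c J ≤ listCost c ((S.take m).filter (· ∈ J)) := by
          rw [← hm, ← hn]
          exact setBudget_le_listBudget c (hS.filter hJI) (ho.filter hS.1 _)
      _ = setCost c ((S.take m).toFinset ∩ J) := by
          rw [← setCost_toFinset c (hnd.filter _), toFinset_filter, ← Finset.filter_mem_eq_inter]
          simp only [decide_eq_true_eq]
  · rw [setCost_toFinset c hnd, ← hSb]
    exact listCost_take_le_listBudget c S m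

end Budgets

lemma isIdealIn_self {α : Type*} {r : α → α → Prop} (I : Finset α) : IsIdealIn r I I :=
  ⟨subset_rfl, fun _ _ _ hi _ => hi⟩

lemma exists_isIdealIn_forall_setCost_le {α : Type*} {r : α → α → Prop} (c : α → ℝ)
    (I : Finset α) :
    ∃ M, IsIdealIn r I M ∧ ∀ M', IsIdealIn r I M' → setCost c M ≤ setCost c M' := by
  classical
  have hmem : ∀ M, M ∈ I.powerset.filter (IsIdealIn r I) ↔ IsIdealIn r I M := fun M => by
    simpa using fun h => h.1
  obtain ⟨M, hM, hmin⟩ :=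
    Finset.exists_min_image _ (setCost c) ⟨I, (hmem I).mpr (isIdealIn_self I)⟩
  exact ⟨M, (hmem M).mp hM, fun M' hM' => hmin M' ((hmem M').mpr hM')⟩

section Ideals

variable {r : ι → ι → Prop}

lemma IsIdealIn.union {I A B : Finset ι} (hA : IsIdealIn r I A) (hB : IsIdealIn r I B) :
    IsIdealIn r I (A ∪ B) := by
  refine ⟨Finset.union_subset hA.1 hB.1, fun j hj i hi hij => ?_⟩
  rcases Finset.mem_union.mp hj with hj | hj
  · exact Finset.mem_union_left _ (hA.2 j hj i hi hij)
  · exact Finset.mem_union_right _ (hB.2 j hj i hi hij)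

/-- With `P` as in `exists_isIdealIn_setBudget_le_setCost_inter`, take `K = P ∪ J`:
`c(K) - b(I) ≤ c(P ∪ J) - c(P) = c(J) - c(P ∩ J) ≤ c(J) - b(J)`. -/
lemma exists_isIdealIn_setCost_sub_setBudget_le_setReturn (hr : IsPartialOrder ι r)
    (c : ι → ℝ) {I J : Finset ι} (hJ : IsIdealIn r I J) :
    ∃ K, IsIdealIn r I K ∧ setCost c K - setBudget r c I ≤ setReturn r c J := by
  obtain ⟨P, hP, hbJ, hbI⟩ := exists_isIdealIn_setBudget_le_setCost_inter c hr hJ.1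
  have hincl : setCost c (P ∪ J) + setCost c (P ∩ J) = setCost c P + setCost c J :=
    Finset.sum_union_inter
  exact ⟨P ∪ J, hP.union hJ, by unfold setReturn; linarith⟩

lemma IsIrreducibleIn.setCost_le_of_isIdealIn (hr : IsPartialOrder ι r) {c : ι → ℝ}
    {N I : Finset ι} (hI : IsIrreducibleIn r c N I) (hc : setCost c I < 0) {M : Finset ι}
    (hM : IsIdealIn r I M) :
    setCost c I ≤ setCost c M := by
  obtain ⟨M₀, hM₀, hmin⟩ := exists_isIdealIn_forall_setCost_le (r := r) c I
  refine le_trans ?_ (hmin M hM)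
  by_contra! hlt
  obtain ⟨K, hK, hKM₀⟩ := exists_isIdealIn_setCost_sub_setBudget_le_setReturn hr c hM₀
  -- minimality of `M₀` turns `hKM₀` into `b(M₀) ≤ b(I)`, ruling out `I ⪯ M₀`
  have hM₀K := hmin K hK
  unfold setReturn at hKM₀
  rcases hI.2 M₀ hM₀ with ⟨-, hpos⟩ | ⟨-, -, hb⟩ | ⟨-, -, hb, hret⟩ | ⟨hpos, -⟩
  · linarith
  · linarith
  · unfold setReturn at hret; linarith
  · linarith

end Ideals

theorem irreducible_ideal_return (r : ι → ι → Prop) (hr : IsPartialOrder ι r)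
    (c : ι → ℝ) (N I : Finset ι) (hI : IsIrreducibleIn r c N I) :
    ∀ J, IsIdealIn r I J → setReturn r c I ≤ setReturn r c J := by
  intro J hJ
  rcases lt_or_ge (setCost c I) 0 with hc | hc
  · obtain ⟨K, hK, hKJ⟩ := exists_isIdealIn_setCost_sub_setBudget_le_setReturn hr c hJ
    have := hI.setCost_le_of_isIdealIn hr hc hK
    unfold setReturn at hKJ ⊢
    linarith
  · rcases hI.2 J hJ with ⟨hneg, -⟩ | ⟨hneg, -⟩ | ⟨hneg, -⟩ | ⟨-, -, hret⟩
    iterate 3 linarith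
    exact hret
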